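/- Let f : A → B be a map between strict ω-categories (or magmas over a strict ω-category) equipped with a contraction, where composition in A is compatible with f. If x, y are parallel k-cells with fx = fy, then the composite of contraction cells [x,y] followed by [y,x] is sent by f to an identity: f([y,x] ∘ [x,y]) = i(f(x)); consequently, if the contraction at dimension k+2 forces parallel (k+1)-cells over the same cell of B to be related by a contraction cell and at top dimension cells over the same cell with equal boundary are equal, then [y,x] ∘ [x,y] = i(x) at top dimension. -/
import Mathlib


/-- A reflexive globular set: cells in each dimension with source, target and
(putative) identity maps satisfying the globularity conditions `ss = st`, `ts = tt`
and the reflexivity conditions `si = ti = id`. -/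
structure RGlob where
  cells : ℕ → Type
  src : ∀ {n : ℕ}, cells (n + 1) → cells n
  tgt : ∀ {n : ℕ}, cells (n + 1) → cells n
  ids : ∀ {n : ℕ}, cells n → cells (n + 1)
  src_src : ∀ {n : ℕ} (x : cells (n + 2)), src (src x) = src (tgt x)
  tgt_tgt : ∀ {n : ℕ} (x : cells (n + 2)), tgt (src x) = tgt (tgt x)
  src_ids : ∀ {n : ℕ} (x : cells n), src (ids x) = x
  tgt_ids : ∀ {n : ℕ} (x : cells n), tgt (ids x) = x

/-- Two `k`-cells are parallel if `k = 0`, or if they have the same source and the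
same target. -/
def RGlob.Parallel (A : RGlob) : ∀ {n : ℕ}, A.cells n → A.cells n → Prop
  | 0, _, _ => True
  | _ + 1, x, y => A.src x = A.src y ∧ A.tgt x = A.tgt y

lemma RGlob.Parallel.refl (A : RGlob) : ∀ {n : ℕ} (x : A.cells n), A.Parallel x x
  | 0, _ => trivial
  | _ + 1, _ => ⟨rfl, rfl⟩

/-- A map of reflexive globular sets: a family of maps on cells commuting with
source, target and identities. -/
structure RGlobHom (A B : RGlob) where
  app : ∀ n : ℕ, A.cells n → B.cells n
  app_src : ∀ {n : ℕ} (x : A.cells (n + 1)), app n (A.src x) = B.src (app (n + 1) x)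
  app_tgt : ∀ {n : ℕ} (x : A.cells (n + 1)), app n (A.tgt x) = B.tgt (app (n + 1) x)
  app_ids : ∀ {n : ℕ} (x : A.cells n), app (n + 1) (A.ids x) = B.ids (app n x)

/-- A contraction on a map `f : A → B` of reflexive globular sets: for every pair of
parallel `k`-cells `α, β` of `A` with `fα = fβ`, a `(k+1)`-cell `[α, β] : α ⟶ β`
lying over the putative identity `i(fα)`, such that `[α, α] = i α`. -/
structure Contraction {A B : RGlob} (f : RGlobHom A B) where
  cell : ∀ {n : ℕ} (x y : A.cells n), A.Parallel x y → f.app n x = f.app n y →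
    A.cells (n + 1)
  cell_src : ∀ {n : ℕ} (x y : A.cells n) (h : A.Parallel x y) (h' : f.app n x = f.app n y),
    A.src (cell x y h h') = x
  cell_tgt : ∀ {n : ℕ} (x y : A.cells n) (h : A.Parallel x y) (h' : f.app n x = f.app n y),
    A.tgt (cell x y h h') = y
  map_cell : ∀ {n : ℕ} (x y : A.cells n) (h : A.Parallel x y) (h' : f.app n x = f.app n y),
    f.app (n + 1) (cell x y h h') = B.ids (f.app n x)
  cell_refl : ∀ {n : ℕ} (x : A.cells n) (h : A.Parallel x x),
    cell x x h rfl = A.ids x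

/-- A reflexive globular set equipped with (binary, codimension-1) composition of
cells, as in a magma or a strict ω-category. -/
structure CompGlob extends RGlob where
  comp : ∀ {n : ℕ} (g f : cells (n + 1)), src g = tgt f → cells (n + 1)
  comp_src : ∀ {n : ℕ} (g f : cells (n + 1)) (h : src g = tgt f),
    src (comp g f h) = src f
  comp_tgt : ∀ {n : ℕ} (g f : cells (n + 1)) (h : src g = tgt f),
    tgt (comp g f h) = tgt g

/-- Let `f : A → B` be a map between structures with composition (a magma over a strict
ω-category, as in Penon's definition), equipped with a contraction, where `f` is
compatible with composition and identities in `B` are strict units. If `x, y` are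
parallel `k`-cells with `fx = fy`, then the composite `[y,x] ∘ [x,y]` of contraction
cells is sent by `f` to the identity `i(f(x))`; consequently, if at top dimension cells
lying over the same cell of `B` with equal boundary are equal, then
`[y,x] ∘ [x,y] = i(x)`. -/
theorem contraction_cells_compose_to_identity
    (A B : CompGlob) (f : RGlobHom A.toRGlob B.toRGlob) (c : Contraction f)
    (hf : ∀ {n : ℕ} (g g' : A.cells (n + 1)) (p : A.src g = A.tgt g')
      (q : B.src (f.app (n + 1) g) = B.tgt (f.app (n + 1) g')),
      f.app (n + 1) (A.comp g g' p) = B.comp (f.app (n + 1) g) (f.app (n + 1) g') q)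
    (hB : ∀ {n : ℕ} (z : B.cells n) (q : B.src (B.ids z) = B.tgt (B.ids z)),
      B.comp (B.ids z) (B.ids z) q = B.ids z)
    (N : ℕ) (x y : A.cells N)
    (hp1 : A.toRGlob.Parallel x y) (hp2 : A.toRGlob.Parallel y x)
    (hxy : f.app N x = f.app N y)
    (hcomp : A.src (c.cell y x hp2 hxy.symm) = A.tgt (c.cell x y hp1 hxy)) :
    f.app (N + 1) (A.comp (c.cell y x hp2 hxy.symm) (c.cell x y hp1 hxy) hcomp) =
      B.ids (f.app N x) ∧
    ((∀ u v : A.cells (N + 1), A.toRGlob.Parallel u v →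
        f.app (N + 1) u = f.app (N + 1) v → u = v) →
      A.comp (c.cell y x hp2 hxy.symm) (c.cell x y hp1 hxy) hcomp = A.ids x) := by
  have key : f.app (N + 1) (A.comp (c.cell y x hp2 hxy.symm) (c.cell x y hp1 hxy) hcomp) =
      B.ids (f.app N x) := by
    have q : B.src (f.app (N+1) (c.cell y x hp2 hxy.symm)) =
        B.tgt (f.app (N+1) (c.cell x y hp1 hxy)) := by
      rw [c.map_cell, c.map_cell, ← hxy, B.src_ids, B.tgt_ids]
    rw [hf _ _ _ q]
    have h1 : f.app (N+1) (c.cell y x hp2 hxy.symm) = B.ids (f.app N x) := by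
      rw [c.map_cell, hxy]
    have h2 := c.map_cell x y hp1 hxy
    simp only [h1, h2]
    exact hB _ _
  refine ⟨key, fun htop => ?_⟩
  apply htop
  · constructor
    · rw [A.comp_src, c.cell_src, A.src_ids]
    · rw [A.comp_tgt, c.cell_tgt, A.tgt_ids]
  · rw [key, f.app_ids]
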